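/- arXiv:2011.05772 — 2 statements merged into one kernel-verified Lean document; each statement's English description precedes it below -/
import Mathlib

section
/- Let G be a finite connected graph and v0 a vertex. Construct the graph 𝒢(v0) on vertex set V ⊔ V' (two disjoint copies of V) whose edges are: {u,w} and {u',w'} for every non-cross edge {u,w} of G, and {u,w'} and {u',w} for every cross edge {u,w} of G with respect to v0. Then 𝒢(v0) is bipartite. -/
/-!
Colour a vertex of the first copy by the parity of its distance to `v0`, and a vertex of the
second copy by the opposite parity. Along an edge of `G` the distance to `v0` changes by at most
one, so a non-cross edge joins opposite parities inside a copy, while a cross edge joins equal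
parities, hence opposite colours, across the copies.
-/

open SimpleGraph Sum

variable {V : Type*}

/-- The bipartite double construction `𝒢(v0)` of `G` with respect to `v0`: two copies of `V`;
every non-cross edge of `G` is kept inside each copy, and every cross edge `{u,w}`
(i.e. `d(v0,u) = d(v0,w)`) is replaced by the two edges `{u,w′}` and `{u′,w}` between the copies. -/
def doubleCover (G : SimpleGraph V) (v0 : V) : SimpleGraph (V ⊕ V) where
  Adj x y :=
    match x, y with
    | inl u, inl w => G.Adj u w ∧ G.dist v0 u ≠ G.dist v0 w
    | inr u, inr w => G.Adj u w ∧ G.dist v0 u ≠ G.dist v0 w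
    | inl u, inr w => G.Adj u w ∧ G.dist v0 u = G.dist v0 w
    | inr u, inl w => G.Adj u w ∧ G.dist v0 u = G.dist v0 w
  symm := by
    refine ⟨?_⟩
    rintro (u|u) (w|w) ⟨h1, h2⟩ <;> exact ⟨h1.symm, by omega⟩
  loopless := by
    refine ⟨?_⟩
    rintro (u|u) ⟨h, _⟩ <;> exact G.ne_of_adj h rfl

theorem SimpleGraph.Adj.bodd_dist_ne_of_dist_ne {G : SimpleGraph V} {u v w : V} (h : G.Adj v w)
    (hne : G.dist u v ≠ G.dist u w) : (G.dist u v).bodd ≠ (G.dist u w).bodd := by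
  rcases h.diff_dist_adj (u := u) with heq | hsucc | hpred
  · exact absurd heq.symm hne
  · simp [hsucc]
  · have hv : G.dist u v = G.dist u w + 1 := by omega
    simp [hv]

noncomputable def doubleCoverColoring (G : SimpleGraph V) (v0 : V) :
    (doubleCover G v0).Coloring Bool :=
  Coloring.mk (Sum.elim (fun u => (G.dist v0 u).bodd) (fun u => !(G.dist v0 u).bodd)) <| by
    rintro (u | u) (w | w) ⟨hadj, hd⟩
    · exact hadj.bodd_dist_ne_of_dist_ne hd
    · simp [hd]
    · simp [hd]
    · simpa using hadj.bodd_dist_ne_of_dist_ne hd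

theorem doubleCover_bipartite_general (G : SimpleGraph V) (v0 : V) :
    (doubleCover G v0).Colorable 2 :=
  (doubleCoverColoring G v0).colorable

/-- The graph `𝒢(v0)` is bipartite. -/
theorem doubleCover_bipartite [Fintype V] (G : SimpleGraph V) (hG : G.Connected) (v0 : V) :
    (doubleCover G v0).Colorable 2 :=
  doubleCover_bipartite_general G v0
end

section
/- Consider the layered execution graph ℬ obtained from an execution of amnesiac flooding with intermittent availabilities: in a round where a node's channel is unavailable, its pending send is delayed by exactly two rounds (next round of equal parity). If the total number of unavailable (node, round) pairs is f, then the number of layers of ℬ (equivalently, the termination time of the modified algorithm) exceeds that of the fault-free execution by at most 2f; hence the algorithm terminates after at most 2·Diam(G) + 2f + 1 rounds. -/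
open SimpleGraph
open scoped Classical

variable {V : Type*}

/-- Merge newly received senders `R` into a parity slot `o` of the AFI state:
`none` (`⊥`) means no pending message; receiving senders turns the slot into the set of
senders received (joined with the previous content). -/
noncomputable def afiMerge (o : Option (Set V)) (R : Set V) : Option (Set V) :=
  if R.Nonempty then some (o.getD ∅ ∪ R) else o

section AFI

variable (G : SimpleGraph V) (v0 : V) (A : V → ℕ → Bool)
  (send : ℕ → Set (V × V)) (s : ℕ → V → Option (Set V))

/-- The semantics of algorithm AFI (amnesiac flooding with intermittent channel
availabilities `A`) for a single broadcast by `v0` in round 1: `s i v` is the parity slot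
of node `v` relevant in round `i` (the senders recorded in rounds of parity `i % 2` and
not yet served), and `send i` is the set of directed send events of round `i`.  A node
forwards in round `i` iff its channel is available (`A v i = true`) and its parity slot is
defined; it sends to all neighbors not recorded in the slot and then clears the slot to
`⊥`; messages sent in round `i` are received in round `i + 1` and recorded in the slot of
that parity. -/
structure AFIExec : Prop where
  hs1 : s 1 = fun v => if v = v0 then some ∅ else none
  hsend0 : send 0 = ∅
  hsend : ∀ i, 1 ≤ i → send i =
    {p | A p.1 i = true ∧ s i p.1 ≠ none ∧ G.Adj p.1 p.2 ∧ p.2 ∉ (s i p.1).getD ∅}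
  hs2 : ∀ v, s 2 v = afiMerge none {w | (w, v) ∈ send 1}
  hsstep : ∀ i, 1 ≤ i → ∀ v, s (i + 2) v =
    afiMerge (if A v i = true then none else s i v) {w | (w, v) ∈ send (i + 1)}

end AFI

section AFIAux

lemma afiMerge_getD (o : Option (Set V)) (R : Set V) :
    (afiMerge o R).getD ∅ = o.getD ∅ ∪ R := by
  unfold afiMerge
  split
  · rfl
  · rename_i h
    rw [Set.not_nonempty_iff_eq_empty.mp h, Set.union_empty]

lemma afiMerge_ne_none (o : Option (Set V)) (R : Set V) :
    afiMerge o R ≠ none ↔ (o ≠ none ∨ R.Nonempty) := by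
  unfold afiMerge
  split
  · rename_i h; simp [h]
  · rename_i h; simp [h]

variable {G : SimpleGraph V} {v0 : V} {A : V → ℕ → Bool}
  {send : ℕ → Set (V × V)} {s : ℕ → V → Option (Set V)}
  (he : AFIExec G v0 A send s)

include he

lemma AFI.act1 {v : V} (h : s 1 v ≠ none) : v = v0 := by
  rw [he.hs1] at h
  by_contra hne
  simp [hne] at h

lemma AFI.act_v0 : s 1 v0 = some ∅ := by rw [he.hs1]; simp

lemma AFI.slot1 (v : V) : (s 1 v).getD ∅ = ∅ := by
  rw [he.hs1]
  by_cases h : v = v0 <;> simp [h]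

lemma AFI.send_mem {i : ℕ} (hi : 1 ≤ i) (y x : V) :
    (y, x) ∈ send i ↔
      (A y i = true ∧ s i y ≠ none ∧ G.Adj y x ∧ x ∉ (s i y).getD ∅) := by
  rw [he.hsend i hi]; rfl

lemma AFI.sstep {i : ℕ} (hi : 2 ≤ i) (v : V) :
    s i v = afiMerge (if 3 ≤ i ∧ A v (i-2) = false then s (i-2) v else none)
      {w | (w, v) ∈ send (i-1)} := by
  rcases Nat.lt_or_ge i 3 with h3 | h3
  · have : i = 2 := by omega
    subst this
    have := he.hs2 v
    simp only [show ¬(3 ≤ 2 ∧ A v (2-2) = false) by omega, if_neg]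
    simpa using this
  · have hrep : i - 2 + 2 = i := by omega
    have h1 : 1 ≤ i - 2 := by omega
    have := he.hsstep (i-2) h1 v
    rw [hrep] at this
    have hrep2 : i - 2 + 1 = i - 1 := by omega
    rw [hrep2] at this
    rw [this]
    congr 1
    by_cases hA : A v (i-2) = true
    · rw [if_pos hA, if_neg (by simp [hA])]
    · have hA' : A v (i-2) = false := by simpa using hA
      rw [if_neg hA, if_pos ⟨h3, hA'⟩]

lemma AFI.act_cases {i : ℕ} (hi : 2 ≤ i) {v : V} (hv : s i v ≠ none) :
    (∃ y, (y, v) ∈ send (i-1)) ∨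
      (3 ≤ i ∧ A v (i-2) = false ∧ s (i-2) v ≠ none) := by
  rw [AFI.sstep he hi v, afiMerge_ne_none] at hv
  rcases hv with h | h
  · right
    by_cases hc : 3 ≤ i ∧ A v (i-2) = false
    · rw [if_pos hc] at h; exact ⟨hc.1, hc.2, h⟩
    · rw [if_neg hc] at h; exact absurd rfl h
  · left; obtain ⟨y, hy⟩ := h; exact ⟨y, hy⟩

lemma AFI.slot_mem {i : ℕ} (hi : 2 ≤ i) {v y : V} (hy : y ∈ (s i v).getD ∅) :
    (3 ≤ i ∧ A v (i-2) = false ∧ y ∈ (s (i-2) v).getD ∅) ∨ (y, v) ∈ send (i-1) := by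
  rw [AFI.sstep he hi v, afiMerge_getD] at hy
  rcases hy with h | h
  · by_cases hc : 3 ≤ i ∧ A v (i-2) = false
    · rw [if_pos hc] at h; exact Or.inl ⟨hc.1, hc.2, h⟩
    · rw [if_neg hc] at h; simp at h
  · exact Or.inr h

lemma AFI.recv {i : ℕ} (hi : 2 ≤ i) {v y : V} (hy : (y, v) ∈ send (i-1)) :
    s i v ≠ none ∧ y ∈ (s i v).getD ∅ := by
  constructor
  · rw [AFI.sstep he hi v, afiMerge_ne_none]
    exact Or.inr ⟨y, hy⟩
  · rw [AFI.sstep he hi v, afiMerge_getD]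
    exact Or.inr hy

lemma AFI.hold {t : ℕ} (ht : 1 ≤ t) {v : V} (hv : s t v ≠ none) (hA : A v t = false) :
    s (t+2) v ≠ none ∧ (s t v).getD ∅ ⊆ (s (t+2) v).getD ∅ := by
  have := he.hsstep t ht v
  rw [if_neg (by simp [hA])] at this
  constructor
  · rw [this, afiMerge_ne_none]; exact Or.inl hv
  · rw [this, afiMerge_getD]; exact Set.subset_union_left

/-- Run persistence: an active unserved node stays active. -/
lemma AFI.RP : ∀ (k t : ℕ) (v : V), 1 ≤ t → s t v ≠ none →
    (∀ j, j < k → ¬(s (t+2*j) v ≠ none ∧ A v (t+2*j) = true)) → s (t+2*k) v ≠ none := by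
  intro k
  induction k with
  | zero => intro t v _ hv _; simpa using hv
  | succ k ih =>
    intro t v ht hv hns
    have hk : s (t+2*k) v ≠ none := ih t v ht hv (fun j hj => hns j (by omega))
    have hA : A v (t+2*k) = false := by
      by_contra h
      exact hns k (by omega) ⟨hk, by simpa using h⟩
    have := (AFI.hold he (by omega) hk hA).1
    rwa [show t+2*k+2 = t+2*(k+1) by ring] at this

/-- Trace lemma: slot members previously served. -/
lemma AFI.TR : ∀ (r : ℕ), 1 ≤ r → ∀ (x y : V), y ∈ (s r x).getD ∅ →
    ∃ t, 1 ≤ t ∧ t < r ∧ t % 2 = (r+1) % 2 ∧ (y, x) ∈ send t := by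
  intro r
  induction r using Nat.strong_induction_on with
  | _ r ih =>
    intro hr x y hy
    rcases Nat.lt_or_ge r 2 with h2 | h2
    · have : r = 1 := by omega
      subst this
      rw [AFI.slot1 he] at hy
      exact absurd hy (Set.notMem_empty y)
    · rcases AFI.slot_mem he h2 hy with ⟨h3, _, hmem⟩ | hsend
      · obtain ⟨t, ht1, ht2, ht3, ht4⟩ := ih (r-2) (by omega) (by omega) x y hmem
        exact ⟨t, ht1, by omega, by omega, ht4⟩
      · exact ⟨r-1, by omega, by omega, by omega, hsend⟩

lemma AFI.recv' {t : ℕ} (ht : 1 ≤ t) {v y : V} (hy : (y, v) ∈ send t) :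
    s (t+1) v ≠ none ∧ y ∈ (s (t+1) v).getD ∅ := by
  have h2 : (y, v) ∈ send (t+1-1) := by rw [show t+1-1 = t by omega]; exact hy
  exact AFI.recv he (by omega) h2

/-- Dead after serve: once a node serves a parity class it is never active in it again. -/
lemma AFI.DS : ∀ (ρ t : ℕ) (x : V), 1 ≤ t → s t x ≠ none → A x t = true →
    t < ρ → ρ % 2 = t % 2 → s ρ x = none := by
  intro ρ
  induction ρ using Nat.strong_induction_on with
  | _ ρ ih =>
    intro t x ht hx hA htp hpar
    by_contra hact
    have hρ2 : 2 ≤ ρ := by omega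
    rcases AFI.act_cases he hρ2 hact with ⟨y, hy⟩ | ⟨h3, hAf, hprev⟩
    · obtain ⟨hAy, hActy, hAdjyx, hxns⟩ := (AFI.send_mem he (show 1 ≤ ρ-1 by omega) y x).mp hy
      by_cases hys : y ∈ (s t x).getD ∅
      · obtain ⟨t', ht'1, ht'2, ht'3, ht'4⟩ := AFI.TR he t ht x y hys
        obtain ⟨hA', hAct', _, _⟩ := (AFI.send_mem he ht'1 y x).mp ht'4
        exact hActy (ih (ρ-1) (by omega) t' y ht'1 hAct' hA' (by omega) (by omega))
      · have hxy : (x, y) ∈ send t := (AFI.send_mem he ht x y).mpr ⟨hA, hx, hAdjyx.symm, hys⟩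
        have hbase := AFI.recv' he ht hxy
        have key : ∀ k, t+1+2*k ≤ ρ-1 →
            ((s (t+1+2*k) y ≠ none ∧ x ∈ (s (t+1+2*k) y).getD ∅) ∨
             ∃ σ, 1 ≤ σ ∧ σ < ρ-1 ∧ σ % 2 = (t+1) % 2 ∧ s σ y ≠ none ∧ A y σ = true) := by
          intro k
          induction k with
          | zero => intro _; left; simpa using hbase
          | succ k ihk =>
            intro hk
            rcases ihk (by omega) with ⟨hAct', hslot'⟩ | hσ
            · by_cases hAy' : A y (t+1+2*k) = true
              · exact Or.inr ⟨t+1+2*k, by omega, by omega, by omega, hAct', hAy'⟩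
              · have hh := AFI.hold he (by omega) hAct' (by simpa using hAy')
                rw [show t+1+2*k+2 = t+1+2*(k+1) by ring] at hh
                exact Or.inl ⟨hh.1, hh.2 hslot'⟩
            · exact Or.inr hσ
        obtain ⟨k, hk⟩ : ∃ k, t+1+2*k = ρ-1 := ⟨(ρ-1-(t+1))/2, by omega⟩
        rcases key k (by omega) with ⟨_, hslot'⟩ | ⟨σ, hσ1, hσ2, hσ3, hσ4, hσ5⟩
        · rw [hk] at hslot'; exact hxns hslot'
        · exact hActy (ih (ρ-1) (by omega) σ y hσ1 hσ4 hσ5 (by omega) (by omega))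
    · rcases Nat.eq_or_lt_of_le (show t ≤ ρ-2 by omega) with heq | hlt
      · rw [← heq] at hAf; rw [hA] at hAf; exact absurd hAf (by simp)
      · exact hprev (ih (ρ-2) (by omega) t x ht hx hA (by omega) (by omega))

lemma AFI.walkExist : ∀ i, 1 ≤ i → ∀ v : V, s i v ≠ none →
    ∃ n, (∃ p : G.Walk v0 v, p.length = n) ∧ n % 2 = (i+1) % 2 := by
  intro i
  induction i using Nat.strong_induction_on with
  | _ i ih =>
    intro hi v hv
    rcases Nat.lt_or_ge i 2 with h2 | h2
    · have hi1 : i = 1 := by omega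
      subst hi1
      have hv0 := AFI.act1 he hv
      subst hv0
      exact ⟨0, ⟨SimpleGraph.Walk.nil, rfl⟩, by omega⟩
    · rcases AFI.act_cases he h2 hv with ⟨y, hy⟩ | ⟨h3, _, hprev⟩
      · obtain ⟨_, hacty, hAdj, _⟩ := (AFI.send_mem he (show 1 ≤ i-1 by omega) y v).mp hy
        obtain ⟨m, ⟨p, hp⟩, hm⟩ := ih (i-1) (by omega) (by omega) y hacty
        exact ⟨m+1, ⟨p.concat hAdj, by rw [SimpleGraph.Walk.length_concat, hp]⟩, by omega⟩
      · obtain ⟨m, hWk, hm⟩ := ih (i-2) (by omega) (by omega) v hprev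
        exact ⟨m, hWk, by omega⟩

end AFIAux

section PhiAux

noncomputable def afiPhi (F : Finset (V × ℕ)) (i : ℕ) : ℕ :=
  (F.filter (fun p => p.2 < i)).card

lemma afiPhi_mono (F : Finset (V × ℕ)) {i j : ℕ} (h : i ≤ j) :
    afiPhi F i ≤ afiPhi F j := by
  apply Finset.card_le_card
  intro p hp
  simp only [Finset.mem_filter] at *
  exact ⟨hp.1, by omega⟩

lemma afiPhi_bump (F : Finset (V × ℕ)) {y : V} {r i j : ℕ}
    (hyr : (y, r) ∈ F) (h1 : i ≤ r) (h2 : r < j) :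
    afiPhi F i + 1 ≤ afiPhi F j := by
  have hss : F.filter (fun p => p.2 < i) ⊂ F.filter (fun p => p.2 < j) := by
    rw [Finset.ssubset_iff_of_subset]
    · refine ⟨(y, r), ?_, ?_⟩
      · simp only [Finset.mem_filter]; exact ⟨hyr, h2⟩
      · simp only [Finset.mem_filter]; push_neg; intro _; omega
    · intro p hp
      simp only [Finset.mem_filter] at *
      exact ⟨hp.1, by omega⟩
  exact Finset.card_lt_card hss

lemma afiPhi_le (F : Finset (V × ℕ)) (i : ℕ) : afiPhi F i ≤ F.card :=
  Finset.card_le_card (Finset.filter_subset _ _)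

lemma walk_penult {G : SimpleGraph V} {v0 x : V} {m : ℕ}
    (h : ∃ p : G.Walk v0 x, p.length = m + 1) :
    ∃ y, G.Adj y x ∧ ∃ q : G.Walk v0 y, q.length = m := by
  obtain ⟨p, hp⟩ := h
  cases h' : p.reverse with
  | nil =>
    exfalso
    have h1 : p.reverse.length = p.length := p.length_reverse
    rw [h'] at h1
    simp only [SimpleGraph.Walk.length_nil] at h1
    omega
  | @cons _ y _ hadj q =>
    refine ⟨y, hadj.symm, q.reverse, ?_⟩
    have h1 : p.reverse.length = p.length := p.length_reverse
    rw [h'] at h1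
    simp only [SimpleGraph.Walk.length_cons] at h1
    rw [SimpleGraph.Walk.length_reverse]
    omega

end PhiAux

section Master

variable {G : SimpleGraph V} {v0 : V} {A : V → ℕ → Bool}
  {send : ℕ → Set (V × V)} {s : ℕ → V → Option (Set V)}
  (he : AFIExec G v0 A send s)
  {F : Finset (V × ℕ)} (hF : ∀ p : V × ℕ, A p.1 p.2 = false ↔ p ∈ F)

include he hF

lemma AFI.master : ∀ N : ℕ,
    (∀ (v : V) (n : ℕ), s N v ≠ none → (∃ p : G.Walk v0 v, p.length = n) →
      n % 2 = (N+1) % 2 → N ≤ 1 + n + 2 * afiPhi F N)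
    ∧ (∀ (x : V) (n : ℕ),
        (∀ t, 1 ≤ t → t ≤ N → t % 2 = N % 2 → s t x = none) →
        (∃ p : G.Walk v0 x, p.length = n) → n % 2 = (N+1) % 2 → n + 1 ≤ N →
        N + 1 ≤ n + 2 * afiPhi F (N+1))
    ∧ (∀ (v w : V) (n : ℕ), s N v ≠ none → G.Adj v w → w ∉ (s N v).getD ∅ →
        (∃ p : G.Walk v0 w, p.length = n) → n % 2 = N % 2 →
        N ≤ n + 2 * afiPhi F N) := by
  intro N
  induction N using Nat.strong_induction_on with
  | _ N IH =>
    refine ⟨?_, ?_, ?_⟩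
    · -- inv1
      intro v n hAct hWk hpar
      rcases Nat.lt_or_ge N 3 with hN2 | hN3
      · omega
      · rcases AFI.act_cases he (by omega) hAct with ⟨y, hy⟩ | ⟨h3, hAf, hprev⟩
        · obtain ⟨hA', hActy, hAdj, hns⟩ := (AFI.send_mem he (show 1 ≤ N-1 by omega) y v).mp hy
          have hP := (IH (N-1) (by omega)).2.2 y v n hActy hAdj hns hWk (by omega)
          have hmono := afiPhi_mono F (show N-1 ≤ N by omega)
          omega
        · have hinv := (IH (N-2) (by omega)).1 v n hprev hWk (by omega)
          have hbump := afiPhi_bump F ((hF (v, N-2)).mp hAf) le_rfl (show N-2 < N by omega)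
          omega
    · -- SK
      intro x n hskip hWk hpar hle
      match n, hWk, hpar, hle with
      | 0, hWk, hpar, hle =>
        exfalso
        obtain ⟨p, hp⟩ := hWk
        have hx : v0 = x := by
          cases p with
          | nil => rfl
          | cons h q => simp [SimpleGraph.Walk.length_cons] at hp
        subst hx
        have hact : s 1 v0 ≠ none := by rw [AFI.act_v0 he]; simp
        exact hact (hskip 1 le_rfl (by omega) (by omega))
      | (m+1), hWk, hpar, hle =>
        obtain ⟨y, hAdj, hWky⟩ := walk_penult hWk
        by_cases hsv : ∃ σ, 1 ≤ σ ∧ σ ≤ N-1 ∧ σ % 2 = (N+1) % 2 ∧ s σ y ≠ none ∧ A y σ = true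
        · exfalso
          obtain ⟨σ, hσ1, hσ2, hσ3, hσ4, hσ5⟩ := hsv
          by_cases hxs : x ∈ (s σ y).getD ∅
          · obtain ⟨t, ht1, ht2, ht3, ht4⟩ := AFI.TR he σ hσ1 y x hxs
            have hax := ((AFI.send_mem he ht1 x y).mp ht4).2.1
            exact hax (hskip t ht1 (by omega) (by omega))
          · have hyx : (y, x) ∈ send σ :=
              (AFI.send_mem he hσ1 y x).mpr ⟨hσ5, hσ4, hAdj, hxs⟩
            exact (AFI.recv' he hσ1 hyx).1 (hskip (σ+1) (by omega) (by omega) (by omega))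
        · by_cases hy : s (N-1) y = none
          · have hskipy : ∀ t, 1 ≤ t → t ≤ N-1 → t % 2 = (N-1) % 2 → s t y = none := by
              intro t ht1 ht2 ht3
              by_contra hna
              rcases Nat.eq_or_lt_of_le ht2 with heq | hlt
              · rw [heq] at hna; exact hna hy
              · have hrp := AFI.RP he ((N-1-t)/2) t y ht1 hna (by
                  intro j hj hc
                  exact hsv ⟨t+2*j, by omega, by omega, by omega, hc.1, hc.2⟩)
                rw [show t+2*((N-1-t)/2) = N-1 by omega] at hrp
                exact hrp hy
            have hSK := (IH (N-1) (by omega)).2.1 y m hskipy hWky (by omega) (by omega)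
            rw [show N-1+1 = N by omega] at hSK
            have hmono := afiPhi_mono F (show N ≤ N+1 by omega)
            omega
          · have hAy : A y (N-1) = false := by
              by_contra h
              exact hsv ⟨N-1, by omega, le_rfl, by omega, hy, by simpa using h⟩
            have hinv := (IH (N-1) (by omega)).1 y m hy hWky (by omega)
            have hbump := afiPhi_bump F ((hF (y, N-1)).mp hAy) le_rfl (show N-1 < N+1 by omega)
            omega
    · -- P
      intro v w n hAct hAdj hws hWk hpar
      rcases Nat.lt_or_ge N 2 with hN1 | hN2
      · omega
      · have hwsend : (w, v) ∉ send (N-1) := fun h => hws (AFI.recv he hN2 h).2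
        by_cases hheld : 3 ≤ N ∧ A v (N-2) = false ∧ s (N-2) v ≠ none
        · obtain ⟨h3, hAf, hprev⟩ := hheld
          have hmono := AFI.hold he (t := N-2) (by omega) hprev hAf
          rw [show N-2+2 = N by omega] at hmono
          have hws' : w ∉ (s (N-2) v).getD ∅ := fun h => hws (hmono.2 h)
          have hP := (IH (N-2) (by omega)).2.2 v w n hprev hAdj hws' hWk (by omega)
          have hbump := afiPhi_bump F ((hF (v, N-2)).mp hAf) le_rfl (show N-2 < N by omega)
          omega
        · rw [AFI.send_mem he (show 1 ≤ N-1 by omega)] at hwsend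
          push_neg at hwsend
          by_cases hγ : v ∈ (s (N-1) w).getD ∅
          · obtain ⟨t, ht1, ht2, ht3, ht4⟩ := AFI.TR he (N-1) (by omega) w v hγ
            obtain ⟨hA', hAct', _, _⟩ := (AFI.send_mem he ht1 v w).mp ht4
            exact absurd (AFI.DS he N t v ht1 hAct' hA' (by omega) (by omega)) hAct
          · by_cases hα : s (N-1) w = none
            · by_cases hserve : ∃ σ, 1 ≤ σ ∧ σ ≤ N-3 ∧ σ % 2 = (N+1) % 2 ∧ s σ w ≠ none ∧ A w σ = true
              · obtain ⟨σ, hσ1, hσ2, hσ3, hσ4, hσ5⟩ := hserve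
                by_cases hvs : v ∈ (s σ w).getD ∅
                · obtain ⟨t, ht1, ht2, ht3, ht4⟩ := AFI.TR he σ hσ1 w v hvs
                  obtain ⟨hA', hAct', _, _⟩ := (AFI.send_mem he ht1 v w).mp ht4
                  exact absurd (AFI.DS he N t v ht1 hAct' hA' (by omega) (by omega)) hAct
                · have hwv : (w, v) ∈ send σ :=
                    (AFI.send_mem he hσ1 w v).mpr ⟨hσ5, hσ4, hAdj.symm, hvs⟩
                  have hrecv := AFI.recv' he hσ1 hwv
                  by_cases hst : ∃ τ, σ+1 ≤ τ ∧ τ ≤ N-2 ∧ τ % 2 = N % 2 ∧ s τ v ≠ none ∧ A v τ = true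
                  · obtain ⟨τ, hτ1, hτ2, hτ3, hτ4, hτ5⟩ := hst
                    exact absurd (AFI.DS he N τ v (by omega) hτ4 hτ5 (by omega) (by omega)) hAct
                  · have hrp := AFI.RP he ((N-2-(σ+1))/2) (σ+1) v (by omega) hrecv.1 (by
                      intro j hj hc
                      exact hst ⟨σ+1+2*j, by omega, by omega, by omega, hc.1, hc.2⟩)
                    rw [show σ+1+2*((N-2-(σ+1))/2) = N-2 by omega] at hrp
                    have hAv : A v (N-2) = false := by
                      by_contra h
                      exact hst ⟨N-2, by omega, le_rfl, by omega, hrp, by simpa using h⟩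
                    exact absurd ⟨by omega, hAv, hrp⟩ hheld
              · have hskip : ∀ t, 1 ≤ t → t ≤ N-1 → t % 2 = (N-1) % 2 → s t w = none := by
                  intro t ht1 ht2 ht3
                  by_contra hna
                  rcases Nat.eq_or_lt_of_le ht2 with heq | hlt
                  · rw [heq] at hna; exact hna hα
                  · have hrp := AFI.RP he ((N-1-t)/2) t w ht1 hna (by
                      intro j hj hc
                      exact hserve ⟨t+2*j, by omega, by omega, by omega, hc.1, hc.2⟩)
                    rw [show t+2*((N-1-t)/2) = N-1 by omega] at hrp
                    exact hrp hα
                by_cases hn : n+1 ≤ N-1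
                · have hSK := (IH (N-1) (by omega)).2.1 w n hskip hWk (by omega) hn
                  rw [show N-1+1 = N by omega] at hSK
                  omega
                · omega
            · have hAw : A w (N-1) = false := by
                by_cases h : A w (N-1) = true
                · exact absurd (hwsend h hα hAdj.symm) hγ
                · simpa using h
              have hinv := (IH (N-1) (by omega)).1 w n hα hWk (by omega)
              have hbump := afiPhi_bump F ((hF (w, N-1)).mp hAw) le_rfl (show N-1 < N by omega)
              omega

end Master

section GraphAux

variable {G : SimpleGraph V}

lemma levelWalk (hG : G.Connected) (v0 : V)
    (hno : ∀ x y : V, G.Adj x y → G.dist v0 x ≠ G.dist v0 y) :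
    ∀ {a b : V} (p : G.Walk a b), (G.dist v0 a + p.length) % 2 = (G.dist v0 b) % 2 := by
  intro a b p
  induction p with
  | nil => simp
  | @cons a c b hadj q ihq =>
    have h1 : G.dist v0 c ≤ G.dist v0 a + 1 := by
      have ht := hG.dist_triangle (u := v0) (v := a) (w := c)
      have : G.dist a c = 1 := SimpleGraph.dist_eq_one_iff_adj.mpr hadj
      omega
    have h2 : G.dist v0 a ≤ G.dist v0 c + 1 := by
      have ht := hG.dist_triangle (u := v0) (v := c) (w := a)
      have : G.dist c a = 1 := SimpleGraph.dist_eq_one_iff_adj.mpr hadj.symm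
      omega
    have hne := hno a c hadj
    simp only [SimpleGraph.Walk.length_cons]
    omega

lemma shortWalk [Fintype V] (hG : G.Connected) (v0 : V) (v : V) (m : ℕ)
    (hWk : ∃ p : G.Walk v0 v, p.length = m) :
    ∃ n, (∃ p : G.Walk v0 v, p.length = n) ∧ n % 2 = m % 2 ∧ n ≤ 2 * G.diam + 1 := by
  haveI : Nonempty V := hG.nonempty
  have hnetop : G.ediam ≠ ⊤ := by
    obtain ⟨u, w, huw⟩ := SimpleGraph.exists_edist_eq_ediam_of_finite (G := G)
    rw [← huw]
    exact (SimpleGraph.edist_ne_top_iff_reachable).mpr (hG.preconnected u w)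
  by_cases hpar : G.dist v0 v % 2 = m % 2
  · obtain ⟨p, hp⟩ := hG.exists_walk_length_eq_dist v0 v
    refine ⟨G.dist v0 v, ⟨p, hp⟩, hpar, ?_⟩
    have := SimpleGraph.dist_le_diam hnetop (u := v0) (v := v)
    omega
  · have hexists : ¬ (∀ x y : V, G.Adj x y → G.dist v0 x ≠ G.dist v0 y) := by
      intro hno
      obtain ⟨p, hp⟩ := hWk
      have h1 := levelWalk hG v0 hno p
      rw [hp] at h1
      simp only [SimpleGraph.dist_self, Nat.zero_add] at h1
      exact hpar (by omega)
    push_neg at hexists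
    obtain ⟨x, y, hadj, hxy⟩ := hexists
    obtain ⟨px, hpx⟩ := hG.exists_walk_length_eq_dist v0 x
    obtain ⟨py, hpy⟩ := hG.exists_walk_length_eq_dist v0 y
    obtain ⟨pxv, hpxv⟩ := hG.exists_walk_length_eq_dist x v
    have hk : G.dist v0 x ≤ G.diam := SimpleGraph.dist_le_diam hnetop
    have hk' : G.dist v0 y ≤ G.diam := SimpleGraph.dist_le_diam hnetop
    have ha : G.dist x v ≤ G.diam := SimpleGraph.dist_le_diam hnetop
    by_cases hp2 : (G.dist v0 x + G.dist x v) % 2 = m % 2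
    · refine ⟨G.dist v0 x + G.dist x v, ⟨px.append pxv, ?_⟩, hp2, by omega⟩
      rw [SimpleGraph.Walk.length_append, hpx, hpxv]
    · refine ⟨G.dist v0 y + 1 + G.dist x v,
        ⟨py.append (SimpleGraph.Walk.cons hadj.symm pxv), ?_⟩, by omega, by omega⟩
      rw [SimpleGraph.Walk.length_append, SimpleGraph.Walk.length_cons, hpy, hpxv]
      omega

end GraphAux

/-- If the availability scheme `A` has exactly `f` unavailable (node, round) pairs, then
algorithm AFI terminates after at most `2·Diam(G) + 2f + 1` rounds: each unavailable pair
delays termination by at most two rounds compared with the fault-free bound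
`2·Diam(G) + 1`. -/
theorem afi_termination [Fintype V] (G : SimpleGraph V) (hG : G.Connected) (v0 : V)
    (A : V → ℕ → Bool) (send : ℕ → Set (V × V)) (s : ℕ → V → Option (Set V))
    (hexec : AFIExec G v0 A send s)
    (hf : {p : V × ℕ | A p.1 p.2 = false}.Finite) :
    ∀ i, 2 * G.diam + 2 * hf.toFinset.card + 1 < i → send i = ∅ := by
  intro i hi
  by_contra hne
  obtain ⟨⟨u, w⟩, hmem⟩ : ∃ p, p ∈ send i := by
    rcases Set.eq_empty_or_nonempty (send i) with h | h
    · exact absurd h hne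
    · exact h
  have hi1 : 1 ≤ i := by omega
  obtain ⟨hA', hAct, hAdj, hws⟩ := (AFI.send_mem hexec hi1 u w).mp hmem
  obtain ⟨m, ⟨p, hp⟩, hm⟩ := AFI.walkExist hexec i hi1 u hAct
  have hWkw : ∃ q : G.Walk v0 w, q.length = m + 1 :=
    ⟨p.concat hAdj, by rw [SimpleGraph.Walk.length_concat, hp]⟩
  obtain ⟨n, hWk', hnpar, hnle⟩ := shortWalk hG v0 w (m+1) hWkw
  have hF : ∀ p : V × ℕ, A p.1 p.2 = false ↔ p ∈ hf.toFinset := by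
    intro p
    rw [Set.Finite.mem_toFinset]
    rfl
  have hP := (AFI.master hexec hF i).2.2 u w n hAct hAdj hws hWk' (by omega)
  have hphile := afiPhi_le hf.toFinset i
  omega
end
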